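/- In the clade-conditional (CCD) softmax parameterization of SBNs over all topologies on X with parameters v, for all nontrivial subsplits s, s' on X: ∂/∂v_{s'} q(s) = q(U(s')) · q(s' | U(s')) · ( q(s' →* s | s') − q(U(s') →* s | U(s')) ). -/

import Mathlib

open Finset

attribute [local instance] Classical.propDecidable

/-- A subsplit on taxa of type `α`: an unordered pair of finite subsets of taxa. -/
abbrev Subsplit (α : Type*) := Sym2 (Finset α)

/-- A parent-child subsplit pair (PCSP): a pair `(t, s)` of subsplits. -/
abbrev PCSPair (α : Type*) := Subsplit α × Subsplit α

namespace Subsplit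

variable {α : Type*} [DecidableEq α]

/-- The parent clade `U(s)` of a subsplit: the union of its two child clades. -/
def clade (s : Subsplit α) : Finset α :=
  Sym2.lift ⟨fun Y Z => Y ∪ Z, fun _ _ => Finset.union_comm _ _⟩ s

/-- A subsplit is valid when its two child clades are disjoint. -/
def Valid (s : Subsplit α) : Prop :=
  Sym2.lift ⟨fun Y Z => Disjoint Y Z, fun _ _ => propext disjoint_comm⟩ s

/-- A subsplit is nontrivial when both child clades are nonempty. -/
def Nontriv (s : Subsplit α) : Prop :=
  Sym2.lift ⟨fun Y Z => Y.Nonempty ∧ Z.Nonempty, fun _ _ => propext and_comm⟩ s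

/-- Restriction of a subsplit to a taxon subset `B`. -/
def restrict (s : Subsplit α) (B : Finset α) : Subsplit α := Sym2.map (fun Y => Y ∩ B) s

end Subsplit

section Defs

variable {α : Type*} [DecidableEq α]

/-- `τ` is a rooted binary tree topology on the clade `W`. -/
structure IsTopology (W : Finset α) (τ : Finset (Subsplit α)) : Prop where
  two_le : 2 ≤ W.card
  valid : ∀ s ∈ τ, Subsplit.Valid s
  nontriv : ∀ s ∈ τ, Subsplit.Nontriv s
  root : ∃! s, s ∈ τ ∧ Subsplit.clade s = W
  children : ∀ s ∈ τ, ∀ C ∈ s, 2 ≤ C.card → ∃! s', s' ∈ τ ∧ Subsplit.clade s' = C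
  parentEx : ∀ s ∈ τ, Subsplit.clade s = W ∨ ∃ t ∈ τ, Subsplit.clade s ∈ t

/-- Restriction of a topology (set of subsplits) to taxon subset `B`:
restrict every subsplit and keep the nontrivial results. -/
noncomputable def restrictT (τ : Finset (Subsplit α)) (B : Finset α) : Finset (Subsplit α) :=
  (τ.image (fun s => Subsplit.restrict s B)).filter (fun s => Subsplit.Nontriv s)

/-- A subsplit support on taxon set `X'`: a set of valid nontrivial subsplits on `X'`. -/
def IsSupport (X' : Finset α) (S : Set (Subsplit α)) : Prop :=
  ∀ s ∈ S, Subsplit.Valid s ∧ Subsplit.Nontriv s ∧ Subsplit.clade s ⊆ X'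

/-- `S(W)`: members of `S` dividing the clade `W`, together with the trivial subsplit `{W, ∅}`. -/
def supportAt (S : Set (Subsplit α)) (W : Finset α) : Set (Subsplit α) :=
  {s | s ∈ S ∧ Subsplit.clade s = W} ∪ {Sym2.mk W (∅ : Finset α)}

/-- The set `s₁ ⊠ s₂` of the two candidate combinations of two subsplits. -/
def boxTimes (s₁ s₂ : Subsplit α) : Set (Subsplit α) :=
  {s | ∃ Y₁ Z₁ Y₂ Z₂ : Finset α, s₁ = Sym2.mk Y₁ Z₁ ∧ s₂ = Sym2.mk Y₂ Z₂ ∧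
    (s = Sym2.mk (Y₁ ∪ Y₂) (Z₁ ∪ Z₂) ∨ s = Sym2.mk (Y₁ ∪ Z₂) (Z₁ ∪ Y₂))}

/-- Reachable clades in the mutual subsplit support construction. -/
inductive ReachClade (S₁ S₂ : Set (Subsplit α)) (X₁ X₂ : Finset α) : Finset α → Prop
  | root : ReachClade S₁ S₂ X₁ X₂ (X₁ ∪ X₂)
  | step {W : Finset α} {s₁ s₂ s : Subsplit α} {C : Finset α} :
      ReachClade S₁ S₂ X₁ X₂ W →
      s₁ ∈ supportAt S₁ (W ∩ X₁) → s₂ ∈ supportAt S₂ (W ∩ X₂) →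
      s ∈ boxTimes s₁ s₂ → Subsplit.Valid s → Subsplit.Nontriv s →
      C ∈ s → 2 ≤ C.card → ReachClade S₁ S₂ X₁ X₂ C

/-- The mutual subsplit support `M(S₁, S₂)`. -/
def mutualSupport (S₁ S₂ : Set (Subsplit α)) (X₁ X₂ : Finset α) : Set (Subsplit α) :=
  {s | ∃ W s₁ s₂, ReachClade S₁ S₂ X₁ X₂ W ∧
    s₁ ∈ supportAt S₁ (W ∩ X₁) ∧ s₂ ∈ supportAt S₂ (W ∩ X₂) ∧
    s ∈ boxTimes s₁ s₂ ∧ Subsplit.Valid s ∧ Subsplit.Nontriv s}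

/-- `(t, s)` is a PCSP on taxon set `X`: `s` is a valid nontrivial subsplit, and `t` is a
subsplit (or the root placeholder `⟨X, ∅⟩`) on `X` having `U(s)` as a child clade. -/
def IsPCSPOn (X : Finset α) (p : PCSPair α) : Prop :=
  Subsplit.Valid p.2 ∧ Subsplit.Nontriv p.2 ∧ Subsplit.Valid p.1 ∧
    Subsplit.clade p.2 ∈ p.1 ∧ Subsplit.clade p.1 ⊆ X ∧
    (Subsplit.Nontriv p.1 ∨ p.1 = Sym2.mk X (∅ : Finset α))

/-- A PCSP support on taxon set `X'`. -/
def IsPCSPSupport (X' : Finset α) (P : Set (PCSPair α)) : Prop :=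
  ∀ p ∈ P, IsPCSPOn X' p

/-- The subsplits of a PCSP support: subsplits occurring in some pair of `P`,
together with the root placeholder `⟨X', ∅⟩`. -/
def subsplitsOfP (X' : Finset α) (P : Set (PCSPair α)) : Set (Subsplit α) :=
  {u | (∃ s, (u, s) ∈ P) ∨ (∃ t, (t, u) ∈ P)} ∪ {Sym2.mk X' (∅ : Finset α)}

/-- `P(t/W)`: the subsplits `s` with `U(s) = W` and `(t → s) ∈ P`,
together with the trivial subsplit `{W, ∅}`. -/
def pcspSupportAt (P : Set (PCSPair α)) (t : Subsplit α) (W : Finset α) : Set (Subsplit α) :=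
  {s | Subsplit.clade s = W ∧ (t, s) ∈ P} ∪ {Sym2.mk W (∅ : Finset α)}

/-- Reachable states `(t/W, t₁/W₁, t₂/W₂)` in the mutual PCSP support construction. -/
inductive ReachState (P₁ P₂ : Set (PCSPair α)) (X₁ X₂ : Finset α) :
    Subsplit α → Finset α → Subsplit α → Finset α → Subsplit α → Finset α → Prop
  | root : ReachState P₁ P₂ X₁ X₂ (Sym2.mk (X₁ ∪ X₂) (∅ : Finset α)) (X₁ ∪ X₂)
      (Sym2.mk X₁ (∅ : Finset α)) X₁ (Sym2.mk X₂ (∅ : Finset α)) X₂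
  | step {t : Subsplit α} {W : Finset α} {t₁ : Subsplit α} {W₁ : Finset α}
      {t₂ : Subsplit α} {W₂ : Finset α} {s₁ s₂ s u₁ u₂ : Subsplit α} {C : Finset α} :
      ReachState P₁ P₂ X₁ X₂ t W t₁ W₁ t₂ W₂ →
      s₁ ∈ pcspSupportAt P₁ t₁ W₁ → s₂ ∈ pcspSupportAt P₂ t₂ W₂ →
      s ∈ boxTimes s₁ s₂ → Subsplit.Valid s → Subsplit.Nontriv s →
      ((Subsplit.Nontriv s₁ ∧ u₁ = s₁) ∨ (¬ Subsplit.Nontriv s₁ ∧ u₁ = t₁)) →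
      ((Subsplit.Nontriv s₂ ∧ u₂ = s₂) ∨ (¬ Subsplit.Nontriv s₂ ∧ u₂ = t₂)) →
      C ∈ s → 2 ≤ C.card →
      ReachState P₁ P₂ X₁ X₂ s C u₁ (C ∩ X₁) u₂ (C ∩ X₂)

/-- The mutual PCSP support `M(P₁, P₂)`. -/
def mutualPCSP (P₁ P₂ : Set (PCSPair α)) (X₁ X₂ : Finset α) : Set (PCSPair α) :=
  {p | ∃ W t₁ W₁ t₂ W₂ s₁ s₂, ReachState P₁ P₂ X₁ X₂ p.1 W t₁ W₁ t₂ W₂ ∧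
    s₁ ∈ pcspSupportAt P₁ t₁ W₁ ∧ s₂ ∈ pcspSupportAt P₂ t₂ W₂ ∧
    p.2 ∈ boxTimes s₁ s₂ ∧ Subsplit.Valid p.2 ∧ Subsplit.Nontriv p.2}

/-- `PathTo M a c`: there is a chain of parent-child pairs of `M` from `a` down to `c`
(possibly empty, when `a = c`). -/
inductive PathTo (M : Set (PCSPair α)) : Subsplit α → Subsplit α → Prop
  | refl (a : Subsplit α) : PathTo M a a
  | cons {a b c : Subsplit α} : (a, b) ∈ M → PathTo M b c → PathTo M a c

/-- `(t, s)` is a PCSP of the topology `τ` on `X`: `s ∈ τ` and `t` is a member of `τ`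
having `U(s)` as a child clade, or the root placeholder `⟨X, ∅⟩` when `U(s) = X`. -/
def IsPCSPOf (X : Finset α) (τ : Finset (Subsplit α)) (t s : Subsplit α) : Prop :=
  s ∈ τ ∧ ((t ∈ τ ∧ Subsplit.clade s ∈ t) ∨
    (Subsplit.clade s = X ∧ t = Sym2.mk X (∅ : Finset α)))

/-- The set of PCSPs of a topology `τ` on `X`. -/
def pcspSet (X : Finset α) (τ : Finset (Subsplit α)) : Set (PCSPair α) :=
  {p | IsPCSPOf X τ p.1 p.2}

/-- `a` is an ancestor of `s` in `τ`: `a ∈ τ` (or the root placeholder) and `U(s)` is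
contained in a child clade of `a`. -/
def IsAncestor (X : Finset α) (τ : Finset (Subsplit α)) (a s : Subsplit α) : Prop :=
  (a ∈ τ ∨ a = Sym2.mk X (∅ : Finset α)) ∧ ∃ C ∈ a, Subsplit.clade s ⊆ C

/-- `d` is a strict descendant of `a`: `U(d)` is contained in a child clade of `a`. -/
def StrictDesc (a d : Subsplit α) : Prop := ∃ C ∈ a, Subsplit.clade d ⊆ C

/-- `d` is a (valid) descendant of `a`: `d = a`, or `U(d)` is contained in a child clade
of `a`. -/
def Descend (a d : Subsplit α) : Prop := d = a ∨ ∃ C ∈ a, Subsplit.clade d ⊆ C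

/-- The parent subsplit of `s` in `τ` (on taxon set `X`): the member of `τ` having `U(s)`
as a child clade if one exists, otherwise the root placeholder `⟨X, ∅⟩`. -/
noncomputable def parentIn (X : Finset α) (τ : Finset (Subsplit α)) (s : Subsplit α) :
    Subsplit α :=
  if h : ∃ t ∈ τ, Subsplit.clade s ∈ t then h.choose else Sym2.mk X (∅ : Finset α)

/-- The finite set of PCSPs of a topology `τ` on `X`. -/
noncomputable def pcspFinset (X : Finset α) (τ : Finset (Subsplit α)) : Finset (PCSPair α) :=
  τ.image (fun s => (parentIn X τ s, s))

/-- All (valid) subsplits on the taxon set `X`. -/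
noncomputable def allSubsplits (X : Finset α) : Finset (Subsplit α) :=
  ((X.powerset ×ˢ X.powerset).image (fun p => Sym2.mk p.1 p.2)).filter (fun s => Subsplit.Valid s)

/-- All nontrivial (valid) subsplits dividing the clade `W`. -/
noncomputable def subsplitsOn (W : Finset α) : Finset (Subsplit α) :=
  (W.powerset.image (fun Y => Sym2.mk Y (W \ Y))).filter (fun s => Subsplit.Nontriv s)

/-- All nontrivial subsplits whose parent clade is a child clade of `a`. -/
noncomputable def childSubsplits (a : Subsplit α) : Finset (Subsplit α) :=
  Sym2.lift ⟨fun Y Z => subsplitsOn Y ∪ subsplitsOn Z, fun _ _ => Finset.union_comm _ _⟩ a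

end Defs

section CCD

variable {α : Type*} [DecidableEq α]

/-- CCD softmax conditional probability `q(s | U(s))`. -/
noncomputable def ccdCond (v : Subsplit α → ℝ) (s : Subsplit α) : ℝ :=
  Real.exp (v s) / ∑ s' ∈ subsplitsOn (Subsplit.clade s), Real.exp (v s')

/-- CCD probability of a topology: `q(τ) = ∏_{s ∈ τ} q(s | U(s))`. -/
noncomputable def ccdTopProb (v : Subsplit α → ℝ) (τ : Finset (Subsplit α)) : ℝ :=
  ∏ s ∈ τ, ccdCond v s

/-- Unconditional subsplit probability `q(s)`: sum of `q(τ)` over topologies `τ ∈ T`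
containing `s`. -/
noncomputable def ccdSubProb (T : Finset (Finset (Subsplit α))) (v : Subsplit α → ℝ)
    (s : Subsplit α) : ℝ :=
  ∑ τ ∈ T.filter (fun τ => s ∈ τ), ccdTopProb v τ

/-- Unconditional clade probability `q(W)`: sum of `q(τ)` over topologies `τ ∈ T` in which
the clade `W` appears (i.e. `W = X` or `W` is a child clade of some subsplit of `τ`). -/
noncomputable def ccdCladeProb (X : Finset α) (T : Finset (Finset (Subsplit α)))
    (v : Subsplit α → ℝ) (W : Finset α) : ℝ :=
  ∑ τ ∈ T.filter (fun τ => W = X ∨ ∃ s ∈ τ, W ∈ s), ccdTopProb v τ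

/-- Fuel-based recursion computing the CCD conditional path probability. -/
noncomputable def ccdPathAux (v : Subsplit α → ℝ) : ℕ → Subsplit α → Subsplit α → ℝ
  | 0, a, d => if d = a then 1 else 0
  | n + 1, a, d => if d = a then 1 else
      ∑ s'' ∈ childSubsplits a, ccdCond v s'' * ccdPathAux v n s'' d

/-- CCD conditional path probability `q(a →* d | a)`: the sum over all descending chains of
subsplits from `a` to `d` of the product of the conditional probabilities along the chain. -/
noncomputable def ccdPath (v : Subsplit α → ℝ) (a d : Subsplit α) : ℝ :=
  ccdPathAux v ((Subsplit.clade a).card + 1) a d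

/-- CCD conditional path probability starting from a clade:
`q(W →* d | W) = Σ_{s'' : U(s'') = W} q(s'' | U(s'')) q(s'' →* d | s'')`. -/
noncomputable def ccdPathFromClade (v : Subsplit α → ℝ) (W : Finset α) (d : Subsplit α) : ℝ :=
  ∑ s'' ∈ subsplitsOn W, ccdCond v s'' * ccdPath v s'' d

end CCD

section SCD

variable {α : Type*} [DecidableEq α]

/-- SCD softmax conditional probability `q(s | t)`. -/
noncomputable def scdCond (v : PCSPair α → ℝ) (t s : Subsplit α) : ℝ :=
  Real.exp (v (t, s)) / ∑ s'' ∈ subsplitsOn (Subsplit.clade s), Real.exp (v (t, s''))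

/-- SCD probability of a topology `τ` on `X`: the product over PCSPs `(t → s)` of `τ` of
`q(s | t)`. -/
noncomputable def scdTopProb (v : PCSPair α → ℝ) (X : Finset α) (τ : Finset (Subsplit α)) : ℝ :=
  ∏ s ∈ τ, scdCond v (parentIn X τ s) s

/-- Unconditional subsplit probability `q(a)` for SCD-parameterized SBNs. -/
noncomputable def scdSubProb (T : Finset (Finset (Subsplit α))) (v : PCSPair α → ℝ)
    (X : Finset α) (a : Subsplit α) : ℝ :=
  ∑ τ ∈ T.filter (fun τ => a ∈ τ), scdTopProb v X τ

/-- Fuel-based recursion computing the SCD conditional path probability. -/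
noncomputable def scdPathAux (v : PCSPair α → ℝ) : ℕ → Subsplit α → Subsplit α → ℝ
  | 0, a, d => if d = a then 1 else 0
  | n + 1, a, d => if d = a then 1 else
      ∑ s'' ∈ childSubsplits a, scdCond v a s'' * scdPathAux v n s'' d

/-- SCD conditional path probability `q(a →* d | a)`. -/
noncomputable def scdPath (v : PCSPair α → ℝ) (a d : Subsplit α) : ℝ :=
  scdPathAux v ((Subsplit.clade a).card + 1) a d

/-- SCD conditional path probability from a subsplit `t` with designated child clade `W`:
`q(t/W →* d | t/W) = Σ_{s'' : U(s'') = W} q(s'' | t) q(s'' →* d | s'')`. -/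
noncomputable def scdPathFrom (v : PCSPair α → ℝ) (t : Subsplit α) (W : Finset α)
    (d : Subsplit α) : ℝ :=
  ∑ s'' ∈ subsplitsOn W, scdCond v t s'' * scdPath v s'' d

/-- Unconditional ancestor-descendant probability `q(a →* d)`: sum of `q(τ)` over topologies
`τ ∈ T` containing both `a` and `d` with `d` a descendant of `a`. -/
noncomputable def scdPairProb (T : Finset (Finset (Subsplit α))) (v : PCSPair α → ℝ)
    (X : Finset α) (a d : Subsplit α) : ℝ :=
  ∑ τ ∈ T.filter (fun τ => a ∈ τ ∧ d ∈ τ ∧ Descend a d), scdTopProb v X τ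

end SCD
/-!
Cutting a topology at its root split shows that the probability `q(s)` of a subsplit is the
path probability `q(X →* s | X)`, so the derivative can be taken through the recursion
`q(C →* s | C) = Σ_r q(r | C) q(r →* s | r)`. The parameter `v_{s'}` enters only the
conditional probabilities at the clade `W = U(s')`: there the softmax derivative contributes
`q(s' | W) (q(s' →* s | s') - q(W →* s | W))`, and every other clade passes on the derivatives
of its child clades. Starting from `X`, these contributions add up to the probability
`q(X →* W)` of reaching `W`, which is `q(W)`.
-/

open Subsplit

section Basic

variable {α : Type*} {Y Z : Finset α}

lemma sum_sum_const_mul_mul {ι κ R : Type*} [NonUnitalNonAssocSemiring R] (s : Finset ι)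
    (t : Finset κ) (c : R) (f : ι → R) (g : κ → R) :
    ∑ i ∈ s, ∑ j ∈ t, c * (f i * g j) = c * ((∑ i ∈ s, f i) * ∑ j ∈ t, g j) := by
  rw [sum_mul_sum, mul_sum]
  simp_rw [mul_sum]

lemma not_subset_of_subset_of_disjoint {A : Finset α} (hA : A.Nonempty) (hd : Disjoint Y Z)
    (hAY : A ⊆ Y) : ¬ A ⊆ Z :=
  fun hAZ => hA.ne_empty ((disjoint_self_iff_empty A).1 (hd.mono hAY hAZ))

variable [DecidableEq α]

lemma not_union_subset_left (hd : Disjoint Y Z) (hZ : Z.Nonempty) : ¬ Y ∪ Z ⊆ Y :=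
  fun h => not_subset_of_subset_of_disjoint hZ hd.symm subset_rfl (union_subset_iff.1 h).2

lemma ssubset_union_left_of_disjoint (hd : Disjoint Y Z) (hZ : Z.Nonempty) : Y ⊂ Y ∪ Z :=
  subset_union_left.ssubset_of_not_subset (not_union_subset_left hd hZ)

lemma ssubset_union_right_of_disjoint (hd : Disjoint Y Z) (hY : Y.Nonempty) : Z ⊂ Y ∪ Z :=
  union_comm Z Y ▸ ssubset_union_left_of_disjoint hd.symm hY

end Basic

namespace Subsplit

variable {α : Type*} {s : Subsplit α} {Y Z C W : Finset α}

@[simp] lemma valid_mk : Valid s(Y, Z) ↔ Disjoint Y Z := Iff.rfl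

@[simp] lemma nontriv_mk : Nontriv s(Y, Z) ↔ Y.Nonempty ∧ Z.Nonempty := Iff.rfl

variable [DecidableEq α]

@[simp] lemma clade_mk (Y Z : Finset α) : clade s(Y, Z) = Y ∪ Z := rfl

lemma subset_clade (hC : C ∈ s) : C ⊆ clade s := by
  induction s using Sym2.ind with
  | _ Y Z => rcases Sym2.mem_iff.1 hC with rfl | rfl <;> simp

lemma ssubset_clade (hv : Valid s) (hn : Nontriv s) (hC : C ∈ s) : C ⊂ clade s := by
  induction s using Sym2.ind with
  | _ Y Z =>
    rcases Sym2.mem_iff.1 hC with rfl | rfl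
    · exact ssubset_union_left_of_disjoint hv hn.2
    · exact ssubset_union_right_of_disjoint hv hn.1

lemma clade_nonempty (hn : Nontriv s) : (clade s).Nonempty := by
  induction s using Sym2.ind with
  | _ Y Z => exact hn.1.mono subset_union_left

lemma two_le_card_clade (hv : Valid s) (hn : Nontriv s) : 2 ≤ #(clade s) := by
  induction s using Sym2.ind with
  | _ Y Z =>
    rw [clade_mk, card_union_of_disjoint hv]
    have := hn.1.card_pos
    have := hn.2.card_pos
    omega

lemma mem_subsplitsOn : s ∈ subsplitsOn W ↔ Valid s ∧ Nontriv s ∧ clade s = W := by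
  constructor
  · intro hs
    obtain ⟨⟨Y, hY, rfl⟩, hn⟩ := mem_filter.1 hs |>.imp_left mem_image.1
    exact ⟨disjoint_sdiff, hn, union_sdiff_of_subset (mem_powerset.1 hY)⟩
  · rintro ⟨hv, hn, rfl⟩
    induction s using Sym2.ind with
    | _ Y Z =>
      refine mem_filter.2 ⟨mem_image.2 ⟨Y, mem_powerset.2 subset_union_left, ?_⟩, hn⟩
      rw [clade_mk, union_sdiff_cancel_left hv]

lemma mk_mem_subsplitsOn :
    s(Y, Z) ∈ subsplitsOn W ↔ Disjoint Y Z ∧ Y.Nonempty ∧ Z.Nonempty ∧ Y ∪ Z = W := by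
  rw [mem_subsplitsOn, valid_mk, nontriv_mk, clade_mk, and_assoc]

lemma subsplitsOn_eq_empty (h : #W < 2) : subsplitsOn W = ∅ :=
  eq_empty_iff_forall_notMem.2 fun s hs => by
    obtain ⟨hv, hn, rfl⟩ := mem_subsplitsOn.1 hs
    have := two_le_card_clade hv hn
    omega

lemma mem_childSubsplits {a u : Subsplit α} :
    u ∈ childSubsplits a ↔ Valid u ∧ Nontriv u ∧ clade u ∈ a := by
  induction a using Sym2.ind with
  | _ Y Z =>
    rw [childSubsplits, Sym2.lift_mk, mem_union, mem_subsplitsOn, mem_subsplitsOn, Sym2.mem_iff]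
    tauto

lemma sum_childSubsplits_mk {M : Type*} [AddCommMonoid M] (hd : Disjoint Y Z) (hY : Y.Nonempty)
    (f : Subsplit α → M) :
    ∑ u ∈ childSubsplits s(Y, Z), f u = ∑ u ∈ subsplitsOn Y, f u + ∑ u ∈ subsplitsOn Z, f u := by
  refine sum_union (disjoint_left.2 fun u hY' hZ' => ?_)
  have hYZ : Y = Z := (mem_subsplitsOn.1 hY').2.2.symm.trans (mem_subsplitsOn.1 hZ').2.2
  exact not_subset_of_subset_of_disjoint hY hd subset_rfl hYZ.subset

end Subsplit

section Topologies

variable {α : Type*} [DecidableEq α] {W C Y Z : Finset α} {τ τ₁ τ₂ : Finset (Subsplit α)}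
  {u : Subsplit α}

namespace IsTopology

theorem mem_induction (ht : IsTopology W τ) {P : Subsplit α → Prop}
    (root : ∀ u ∈ τ, clade u = W → P u) (step : ∀ t ∈ τ, ∀ u ∈ τ, clade u ∈ t → P t → P u) :
    ∀ u ∈ τ, P u := by
  by_contra! h
  obtain ⟨u, hu, hmax⟩ := exists_max_image (τ.filter (¬ P ·)) (fun u => #(clade u))
    (h.imp fun u hu => mem_filter.2 hu)
  obtain ⟨huτ, hPu⟩ := mem_filter.1 hu
  rcases ht.parentEx u huτ with hW | ⟨t, htτ, hut⟩
  · exact hPu (root u huτ hW)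
  · refine hPu (step t htτ u huτ hut (by_contra fun hPt => ?_))
    have := hmax t (mem_filter.2 ⟨htτ, hPt⟩)
    have := card_lt_card (ssubset_clade (ht.valid t htτ) (ht.nontriv t htτ) hut)
    omega

theorem clade_subset (ht : IsTopology W τ) : ∀ u ∈ τ, clade u ⊆ W :=
  ht.mem_induction (fun _ _ h => h.subset) fun _ _ _ _ hut h => (subset_clade hut).trans h

theorem eq_of_clade_eq (ht : IsTopology W τ) {u u' : Subsplit α} (hu : u ∈ τ) (hu' : u' ∈ τ)
    (h : clade u = clade u') : u = u' := by
  rcases ht.parentEx u hu with hW | ⟨t, htτ, hut⟩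
  · obtain ⟨r, -, hr⟩ := ht.root
    rw [hr u ⟨hu, hW⟩, hr u' ⟨hu', h ▸ hW⟩]
  · obtain ⟨r, -, hr⟩ :=
      ht.children t htτ _ hut (two_le_card_clade (ht.valid u hu) (ht.nontriv u hu))
    rw [hr u ⟨hu, rfl⟩, hr u' ⟨hu', h.symm⟩]

theorem exists_clade_eq_iff (ht : IsTopology W τ) (hC : 2 ≤ #C) :
    (∃ u ∈ τ, clade u = C) ↔ C = W ∨ ∃ t ∈ τ, C ∈ t := by
  constructor
  · rintro ⟨u, hu, rfl⟩
    exact ht.parentEx u hu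
  · rintro (rfl | ⟨t, ht', hCt⟩)
    · obtain ⟨r, hr, -⟩ := ht.root
      exact ⟨r, hr⟩
    · obtain ⟨u, hu, -⟩ := ht.children t ht' C hCt hC
      exact ⟨u, hu⟩

theorem sum_subsplitsOn_ite_mem {M : Type*} [AddCommMonoid M] (ht : IsTopology W τ)
    (C : Finset α) (x : M) :
    ∑ d ∈ subsplitsOn C, (if d ∈ τ then x else 0) = if ∃ u ∈ τ, clade u = C then x else 0 := by
  split_ifs with hex
  · obtain ⟨u, hu, rfl⟩ := hex
    rw [sum_eq_single_of_mem u (mem_subsplitsOn.2 ⟨ht.valid u hu, ht.nontriv u hu, rfl⟩)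
      fun d hd hdu => if_neg fun hdτ => hdu (ht.eq_of_clade_eq hdτ hu (mem_subsplitsOn.1 hd).2.2),
      if_pos hu]
  · exact sum_eq_zero fun d hd => if_neg fun hdτ => hex ⟨d, hdτ, (mem_subsplitsOn.1 hd).2.2⟩

theorem eq_mk_or_clade_subset (ht : IsTopology (Y ∪ Z) τ) (hr : s(Y, Z) ∈ τ) :
    ∀ u ∈ τ, u = s(Y, Z) ∨ clade u ⊆ Y ∨ clade u ⊆ Z :=
  ht.mem_induction (fun _ hu h => Or.inl (ht.eq_of_clade_eq hu hr h)) fun t _ u _ hut => by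
    rintro (rfl | h | h)
    · rcases Sym2.mem_iff.1 hut with h | h <;> simp [h]
    · exact Or.inr (Or.inl ((subset_clade hut).trans h))
    · exact Or.inr (Or.inr ((subset_clade hut).trans h))

end IsTopology

noncomputable def allTops (W : Finset α) : Finset (Finset (Subsplit α)) :=
  (allSubsplits W).powerset.filter (IsTopology W)

lemma mem_allTops : τ ∈ allTops W ↔ IsTopology W τ := by
  refine mem_filter.trans ⟨And.right, fun ht => ⟨mem_powerset.2 fun u hu => ?_, ht⟩⟩
  induction u using Sym2.ind with
  | _ Y Z =>
    have hsub := ht.clade_subset _ hu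
    refine mem_filter.2 ⟨mem_image.2 ⟨(Y, Z), ?_, rfl⟩, ht.valid _ hu⟩
    exact mem_product.2 ⟨mem_powerset.2 (union_subset_iff.1 hsub).1,
      mem_powerset.2 (union_subset_iff.1 hsub).2⟩

/-- A clade of fewer than two taxa carries only the empty topology, so that every topology is a
root split together with a topology on each of its child clades. -/
noncomputable def topsOn (C : Finset α) : Finset (Finset (Subsplit α)) :=
  if 2 ≤ #C then allTops C else {∅}

lemma topsOn_of_two_le (hC : 2 ≤ #C) : topsOn C = allTops C := if_pos hC

lemma mem_topsOn : τ ∈ topsOn C ↔ IsTopology C τ ∨ (#C < 2 ∧ τ = ∅) := by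
  unfold topsOn
  split_ifs with hC
  · exact mem_allTops.trans (or_iff_left fun h => by omega).symm
  · exact mem_singleton.trans ⟨fun h => Or.inr ⟨by omega, h⟩,
      fun h => h.elim (fun ht => absurd ht.two_le hC) And.right⟩

lemma IsTopology.of_mem_topsOn (hτ : τ ∈ topsOn C) (hu : u ∈ τ) : IsTopology C τ :=
  (mem_topsOn.1 hτ).resolve_right fun h => by simp [h.2] at hu

lemma IsTopology.of_mem_topsOn_of_two_le (hτ : τ ∈ topsOn C) (hC : 2 ≤ #C) : IsTopology C τ :=
  (mem_topsOn.1 hτ).resolve_right fun h => by omega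

lemma valid_nontriv_subset_of_mem_topsOn (hτ : τ ∈ topsOn C) (hu : u ∈ τ) :
    Valid u ∧ Nontriv u ∧ clade u ⊆ C :=
  have ht := IsTopology.of_mem_topsOn hτ hu
  ⟨ht.valid u hu, ht.nontriv u hu, ht.clade_subset u hu⟩

lemma not_clade_subset_of_mem_topsOn (hd : Disjoint Y Z) (hτ : τ ∈ topsOn Z) (hu : u ∈ τ) :
    ¬ clade u ⊆ Y :=
  have ⟨_, hn, hsub⟩ := valid_nontriv_subset_of_mem_topsOn hτ hu
  not_subset_of_subset_of_disjoint (clade_nonempty hn) hd.symm hsub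

lemma mem_of_mem_insert_union (hd : Disjoint Y Z) (hZ : Z.Nonempty) (h₂ : τ₂ ∈ topsOn Z)
    (hu : u ∈ insert s(Y, Z) (τ₁ ∪ τ₂)) (hsub : clade u ⊆ Y) : u ∈ τ₁ := by
  rcases mem_insert.1 hu with rfl | hu
  · exact absurd hsub (not_union_subset_left hd hZ)
  · exact (mem_union.1 hu).resolve_right fun hu => not_clade_subset_of_mem_topsOn hd h₂ hu hsub

lemma filter_subset_insert_union (hd : Disjoint Y Z) (hZ : Z.Nonempty) (h₁ : τ₁ ∈ topsOn Y)
    (h₂ : τ₂ ∈ topsOn Z) : (insert s(Y, Z) (τ₁ ∪ τ₂)).filter (clade · ⊆ Y) = τ₁ := by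
  ext u
  rw [mem_filter]
  exact ⟨fun ⟨hu, hsub⟩ => mem_of_mem_insert_union hd hZ h₂ hu hsub, fun hu =>
    ⟨mem_insert_of_mem (mem_union_left _ hu), (valid_nontriv_subset_of_mem_topsOn h₁ hu).2.2⟩⟩

lemma eq_of_mem_insert_union_of_clade_eq (hd : Disjoint Y Z) (hY : Y.Nonempty)
    (hZ : Z.Nonempty) (h₁ : τ₁ ∈ topsOn Y) (h₂ : τ₂ ∈ topsOn Z) {u u' : Subsplit α}
    (hu : u ∈ insert s(Y, Z) (τ₁ ∪ τ₂)) (hu' : u' ∈ insert s(Y, Z) (τ₁ ∪ τ₂))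
    (h : clade u = clade u') : u = u' := by
  have swap : insert s(Y, Z) (τ₁ ∪ τ₂) = insert s(Z, Y) (τ₂ ∪ τ₁) := by
    rw [Sym2.eq_swap, union_comm]
  have key₁ : ∀ {u u'}, u ∈ τ₁ → u' ∈ insert s(Y, Z) (τ₁ ∪ τ₂) → clade u = clade u' → u = u' :=
    fun hu hu' h => (IsTopology.of_mem_topsOn h₁ hu).eq_of_clade_eq hu
      (mem_of_mem_insert_union hd hZ h₂ hu' (h ▸ (valid_nontriv_subset_of_mem_topsOn h₁ hu).2.2)) h
  have key₂ : ∀ {u u'}, u ∈ τ₂ → u' ∈ insert s(Y, Z) (τ₁ ∪ τ₂) → clade u = clade u' → u = u' :=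
    fun hu hu' h => (IsTopology.of_mem_topsOn h₂ hu).eq_of_clade_eq hu
      (mem_of_mem_insert_union hd.symm hY h₁ (swap ▸ hu')
        (h ▸ (valid_nontriv_subset_of_mem_topsOn h₂ hu).2.2)) h
  rcases mem_insert.1 hu with rfl | hu
  · rcases mem_insert.1 hu' with rfl | hu'
    · rfl
    · exact ((mem_union.1 hu').elim (key₁ · hu h.symm) (key₂ · hu h.symm)).symm
  · exact (mem_union.1 hu).elim (key₁ · hu' h) (key₂ · hu' h)

theorem isTopology_insert_union (hd : Disjoint Y Z) (hY : Y.Nonempty) (hZ : Z.Nonempty)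
    (h₁ : τ₁ ∈ topsOn Y) (h₂ : τ₂ ∈ topsOn Z) :
    IsTopology (Y ∪ Z) (insert s(Y, Z) (τ₁ ∪ τ₂)) := by
  set σ := insert s(Y, Z) (τ₁ ∪ τ₂)
  have mem : ∀ {u}, u ∈ σ ↔ u = s(Y, Z) ∨ u ∈ τ₁ ∨ u ∈ τ₂ := by simp [σ]
  have sub₁ : τ₁ ⊆ σ := fun u hu => mem.2 (Or.inr (Or.inl hu))
  have sub₂ : τ₂ ⊆ σ := fun u hu => mem.2 (Or.inr (Or.inr hu))
  have props : ∀ u ∈ σ, Valid u ∧ Nontriv u := by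
    intro u hu
    rcases mem.1 hu with rfl | hu | hu
    · exact ⟨hd, hY, hZ⟩
    · exact (valid_nontriv_subset_of_mem_topsOn h₁ hu).imp_right And.left
    · exact (valid_nontriv_subset_of_mem_topsOn h₂ hu).imp_right And.left
  have unique : ∀ {C}, (∃ u ∈ σ, clade u = C) → ∃! u, u ∈ σ ∧ clade u = C :=
    fun ⟨u, hu, hC⟩ => ⟨u, ⟨hu, hC⟩, fun u' ⟨hu', hC'⟩ =>
      eq_of_mem_insert_union_of_clade_eq hd hY hZ h₁ h₂ hu' hu (hC'.trans hC.symm)⟩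
  refine ⟨two_le_card_clade (s := s(Y, Z)) hd ⟨hY, hZ⟩, fun u hu => (props u hu).1,
    fun u hu => (props u hu).2, unique ⟨_, mem_insert_self _ _, rfl⟩, ?_, ?_⟩
  · intro t ht C hCt hC
    refine unique ?_
    rcases mem.1 ht with rfl | ht | ht
    · rcases Sym2.mem_iff.1 hCt with rfl | rfl
      · obtain ⟨u, ⟨hu, hcl⟩, -⟩ := (IsTopology.of_mem_topsOn_of_two_le h₁ hC).root
        exact ⟨u, sub₁ hu, hcl⟩
      · obtain ⟨u, ⟨hu, hcl⟩, -⟩ := (IsTopology.of_mem_topsOn_of_two_le h₂ hC).root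
        exact ⟨u, sub₂ hu, hcl⟩
    · obtain ⟨u, ⟨hu, hcl⟩, -⟩ := (IsTopology.of_mem_topsOn h₁ ht).children t ht C hCt hC
      exact ⟨u, sub₁ hu, hcl⟩
    · obtain ⟨u, ⟨hu, hcl⟩, -⟩ := (IsTopology.of_mem_topsOn h₂ ht).children t ht C hCt hC
      exact ⟨u, sub₂ hu, hcl⟩
  · intro u hu
    rcases mem.1 hu with rfl | hu | hu
    · exact Or.inl rfl
    · refine Or.inr ?_
      rcases (IsTopology.of_mem_topsOn h₁ hu).parentEx u hu with h | ⟨t, ht, hut⟩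
      · exact ⟨_, mem_insert_self _ _, h ▸ Sym2.mem_mk_left _ _⟩
      · exact ⟨t, sub₁ ht, hut⟩
    · refine Or.inr ?_
      rcases (IsTopology.of_mem_topsOn h₂ hu).parentEx u hu with h | ⟨t, ht, hut⟩
      · exact ⟨_, mem_insert_self _ _, h ▸ Sym2.mem_mk_right _ _⟩
      · exact ⟨t, sub₂ ht, hut⟩

theorem IsTopology.filter_subset_mem_topsOn (ht : IsTopology (Y ∪ Z) τ) (hr : s(Y, Z) ∈ τ)
    (hd : Disjoint Y Z) (hZ : Z.Nonempty) : τ.filter (clade · ⊆ Y) ∈ topsOn Y := by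
  rw [mem_topsOn]
  by_cases hY : 2 ≤ #Y
  swap
  · refine Or.inr ⟨by omega, filter_eq_empty_iff.2 fun u hu hsub => ?_⟩
    have := (two_le_card_clade (ht.valid u hu) (ht.nontriv u hu)).trans (card_le_card hsub)
    omega
  have mem : ∀ {u}, u ∈ τ.filter (clade · ⊆ Y) ↔ u ∈ τ ∧ clade u ⊆ Y := mem_filter
  have unique : ∀ {C}, C ⊆ Y → (∃ u ∈ τ, clade u = C) →
      ∃! u, u ∈ τ.filter (clade · ⊆ Y) ∧ clade u = C := fun hCY ⟨u, hu, hC⟩ =>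
    ⟨u, ⟨mem.2 ⟨hu, hC ▸ hCY⟩, hC⟩,
      fun u' ⟨hu', hC'⟩ => ht.eq_of_clade_eq (mem.1 hu').1 hu (hC'.trans hC.symm)⟩
  refine Or.inl ⟨hY, fun u hu => ht.valid u (mem.1 hu).1, fun u hu => ht.nontriv u (mem.1 hu).1,
    unique subset_rfl ?_, ?_, ?_⟩
  · obtain ⟨u, ⟨hu, hcl⟩, -⟩ := ht.children _ hr Y (Sym2.mem_mk_left Y Z) hY
    exact ⟨u, hu, hcl⟩
  · intro t ht' C hCt hC
    obtain ⟨htτ, htY⟩ := mem.1 ht'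
    obtain ⟨u, ⟨hu, hcl⟩, -⟩ := ht.children t htτ C hCt hC
    exact unique ((subset_clade hCt).trans htY) ⟨u, hu, hcl⟩
  · intro u hu
    obtain ⟨huτ, huY⟩ := mem.1 hu
    have hne := clade_nonempty (ht.nontriv u huτ)
    rcases ht.parentEx u huτ with h | ⟨t, htτ, hut⟩
    · exact absurd (h ▸ huY) (not_union_subset_left hd hZ)
    · rcases ht.eq_mk_or_clade_subset hr t htτ with rfl | htY | htZ
      · rcases Sym2.mem_iff.1 hut with h | h
        · exact Or.inl h
        · exact absurd (h ▸ subset_rfl) (not_subset_of_subset_of_disjoint hne hd huY)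
      · exact Or.inr ⟨t, mem.2 ⟨htτ, htY⟩, hut⟩
      · exact absurd ((subset_clade hut).trans htZ) (not_subset_of_subset_of_disjoint hne hd huY)

end Topologies

section Decomposition

variable {α : Type*} [DecidableEq α] {M : Type*} [AddCommMonoid M] {C Y Z : Finset α}

theorem sum_topsOn_eq_sum_subsplitsOn (hC : 2 ≤ #C) (g : Finset (Subsplit α) → M) :
    ∑ τ ∈ topsOn C, g τ = ∑ r ∈ subsplitsOn C, ∑ τ ∈ (topsOn C).filter (r ∈ ·), g τ := by
  simp_rw [sum_filter]
  rw [sum_comm]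
  refine sum_congr rfl fun τ hτ => ?_
  have ht := IsTopology.of_mem_topsOn_of_two_le hτ hC
  obtain ⟨r, hr, -⟩ := ht.root
  rw [ht.sum_subsplitsOn_ite_mem, if_pos ⟨r, hr⟩]

theorem sum_topsOn_filter_mem (hd : Disjoint Y Z) (hY : Y.Nonempty) (hZ : Z.Nonempty)
    (g : Finset (Subsplit α) → M) :
    ∑ τ ∈ (topsOn (Y ∪ Z)).filter (s(Y, Z) ∈ ·), g τ =
      ∑ τ₁ ∈ topsOn Y, ∑ τ₂ ∈ topsOn Z, g (insert s(Y, Z) (τ₁ ∪ τ₂)) := by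
  have glue : ∀ τ ∈ (topsOn (Y ∪ Z)).filter (s(Y, Z) ∈ ·),
      insert s(Y, Z) (τ.filter (clade · ⊆ Y) ∪ τ.filter (clade · ⊆ Z)) = τ := by
    intro τ hτ
    obtain ⟨hτ, hr⟩ := mem_filter.1 hτ
    have ht := IsTopology.of_mem_topsOn hτ hr
    ext u
    simp only [mem_insert, mem_union, mem_filter]
    refine ⟨?_, fun hu => ?_⟩
    · rintro (rfl | ⟨hu, -⟩ | ⟨hu, -⟩) <;> assumption
    · rcases ht.eq_mk_or_clade_subset hr u hu with h | h | h <;> simp [h, hu]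
  rw [← sum_product']
  refine sum_nbij' (fun τ => (τ.filter (clade · ⊆ Y), τ.filter (clade · ⊆ Z)))
    (fun p => insert s(Y, Z) (p.1 ∪ p.2)) ?_ ?_ glue ?_ fun τ hτ => by rw [glue τ hτ]
  · intro τ hτ
    obtain ⟨hτ, hr⟩ := mem_filter.1 hτ
    have ht := IsTopology.of_mem_topsOn hτ hr
    refine mem_product.2 ⟨ht.filter_subset_mem_topsOn hr hd hZ, ?_⟩
    rw [Sym2.eq_swap] at hr
    rw [union_comm] at ht
    exact ht.filter_subset_mem_topsOn hr hd.symm hY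
  · rintro ⟨τ₁, τ₂⟩ hp
    obtain ⟨h₁, h₂⟩ := mem_product.1 hp
    exact mem_filter.2 ⟨mem_topsOn.2 (Or.inl (isTopology_insert_union hd hY hZ h₁ h₂)),
      mem_insert_self _ _⟩
  · rintro ⟨τ₁, τ₂⟩ hp
    obtain ⟨h₁, h₂⟩ := mem_product.1 hp
    refine Prod.ext (filter_subset_insert_union hd hZ h₁ h₂) ?_
    rw [Sym2.eq_swap, union_comm τ₁]
    exact filter_subset_insert_union hd.symm hY h₂ h₁

end Decomposition

section CCDProbabilities

variable {α : Type*} [DecidableEq α] (v : Subsplit α → ℝ) {C W Y Z : Finset α}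
  {a d : Subsplit α}

lemma sum_ccdCond (hW : 2 ≤ #W) : ∑ r ∈ subsplitsOn W, ccdCond v r = 1 := by
  obtain ⟨x, hx⟩ := card_pos.1 (show 0 < #W by omega)
  have hr : s({x}, W \ {x}) ∈ subsplitsOn W := by
    refine mem_subsplitsOn.2 ⟨disjoint_sdiff, ⟨singleton_nonempty x, ?_⟩, ?_⟩
    · rw [← card_pos, card_sdiff_of_subset (singleton_subset_iff.2 hx), card_singleton]
      omega
    · exact union_sdiff_of_subset (singleton_subset_iff.2 hx)
  have hpos : 0 < ∑ r ∈ subsplitsOn W, Real.exp (v r) :=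
    sum_pos (fun _ _ => Real.exp_pos _) ⟨_, hr⟩
  rw [← div_self hpos.ne', sum_div]
  exact sum_congr rfl fun r hr => by rw [ccdCond, (mem_subsplitsOn.1 hr).2.2]

lemma ccdTopProb_insert_union (hd : Disjoint Y Z) (hY : Y.Nonempty) (hZ : Z.Nonempty)
    {τ₁ τ₂ : Finset (Subsplit α)} (h₁ : τ₁ ∈ topsOn Y) (h₂ : τ₂ ∈ topsOn Z) :
    ccdTopProb v (insert s(Y, Z) (τ₁ ∪ τ₂)) =
      ccdCond v s(Y, Z) * (ccdTopProb v τ₁ * ccdTopProb v τ₂) := by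
  have hr : s(Y, Z) ∉ τ₁ ∪ τ₂ := fun h => by
    rcases mem_union.1 h with h | h
    · exact not_union_subset_left hd hZ (valid_nontriv_subset_of_mem_topsOn h₁ h).2.2
    · exact not_subset_of_subset_of_disjoint hY hd subset_rfl
        (subset_union_left.trans (valid_nontriv_subset_of_mem_topsOn h₂ h).2.2)
  have hdisj : Disjoint τ₁ τ₂ := disjoint_left.2 fun u hu₁ hu₂ =>
    not_clade_subset_of_mem_topsOn hd h₂ hu₂ (valid_nontriv_subset_of_mem_topsOn h₁ hu₁).2.2
  rw [ccdTopProb, prod_insert hr, prod_union hdisj, ccdTopProb, ccdTopProb]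

lemma ccdPathAux_eq_ccdPath (d : Subsplit α) :
    ∀ n a, Valid a → Nontriv a → #(clade a) < n → ccdPathAux v n a d = ccdPath v a d := by
  intro n
  induction n using Nat.strong_induction_on with
  | _ n ih =>
  intro a ha hn hlt
  obtain ⟨m, rfl⟩ : ∃ m, n = m + 1 := ⟨n - 1, by omega⟩
  have children : ∀ k < m + 1, #(clade a) ≤ k →
      ∀ u ∈ childSubsplits a, ccdPathAux v k u d = ccdPath v u d := by
    intro k hkm hk u hu
    obtain ⟨huv, hun, hua⟩ := mem_childSubsplits.1 hu
    exact ih k hkm u huv hun ((card_lt_card (ssubset_clade ha hn hua)).trans_le hk)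
  rw [ccdPath, ccdPathAux, ccdPathAux]
  refine if_congr Iff.rfl rfl (sum_congr rfl fun u hu => ?_)
  rw [children m (by omega) (by omega) u hu, children _ hlt le_rfl u hu]

lemma ccdPath_eq (ha : Valid a) (hn : Nontriv a) (d : Subsplit α) :
    ccdPath v a d = if d = a then 1 else ∑ u ∈ childSubsplits a, ccdCond v u * ccdPath v u d := by
  rw [ccdPath, ccdPathAux]
  refine if_congr Iff.rfl rfl (sum_congr rfl fun u hu => ?_)
  obtain ⟨huv, hun, hua⟩ := mem_childSubsplits.1 hu
  rw [ccdPathAux_eq_ccdPath v d _ u huv hun (card_lt_card (ssubset_clade ha hn hua))]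

lemma ccdPath_mk (hd : Disjoint Y Z) (hY : Y.Nonempty) (hZ : Z.Nonempty) (d : Subsplit α) :
    ccdPath v s(Y, Z) d =
      if d = s(Y, Z) then 1 else ccdPathFromClade v Y d + ccdPathFromClade v Z d := by
  rw [ccdPath_eq v (valid_mk.2 hd) (nontriv_mk.2 ⟨hY, hZ⟩), sum_childSubsplits_mk hd hY,
    ccdPathFromClade, ccdPathFromClade]

lemma ccdPath_eq_zero (ha : Valid a) (hn : Nontriv a) (hda : d ≠ a)
    (hss : ¬ clade d ⊂ clade a) : ccdPath v a d = 0 := by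
  suffices ∀ n a, Valid a → Nontriv a → d ≠ a → ¬ clade d ⊂ clade a → ccdPathAux v n a d = 0 from
    this _ a ha hn hda hss
  intro n
  induction n with
  | zero => exact fun a _ _ hda _ => if_neg hda
  | succ n ih =>
    intro a ha hn hda hss
    rw [ccdPathAux, if_neg hda]
    refine sum_eq_zero fun u hu => ?_
    obtain ⟨huv, hun, hua⟩ := mem_childSubsplits.1 hu
    have hua := ssubset_clade ha hn hua
    rw [ih u huv hun (by rintro rfl; exact hss hua) fun h => hss (h.trans hua), mul_zero]

lemma ccdPathFromClade_eq_zero (h : ¬ clade d ⊆ C) : ccdPathFromClade v C d = 0 :=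
  sum_eq_zero fun r hr => by
    obtain ⟨hrv, hrn, rfl⟩ := mem_subsplitsOn.1 hr
    rw [ccdPath_eq_zero v hrv hrn (by rintro rfl; exact h subset_rfl) fun h' => h h'.subset,
      mul_zero]

lemma ccdPathFromClade_clade_self (ha : Valid a) (hn : Nontriv a) :
    ccdPathFromClade v (clade a) a = ccdCond v a := by
  rw [ccdPathFromClade, sum_eq_single_of_mem a (mem_subsplitsOn.2 ⟨ha, hn, rfl⟩),
    ccdPath_eq v ha hn, if_pos rfl, mul_one]
  intro u hu hua
  obtain ⟨huv, hun, hcl⟩ := mem_subsplitsOn.1 hu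
  rw [ccdPath_eq_zero v huv hun (Ne.symm hua) (hcl ▸ (ssubset_irrefl _)), mul_zero]

theorem sum_topsOn_ccdTopProb (C : Finset α) : ∑ τ ∈ topsOn C, ccdTopProb v τ = 1 := by
  induction C using Finset.strongInduction with
  | H C ih =>
  by_cases hC : 2 ≤ #C
  swap
  · simp [topsOn, hC, ccdTopProb]
  rw [sum_topsOn_eq_sum_subsplitsOn hC, ← sum_ccdCond v hC]
  refine sum_congr rfl fun r hr => ?_
  induction r using Sym2.ind with
  | _ Y Z =>
  obtain ⟨hd, hY, hZ, rfl⟩ := mk_mem_subsplitsOn.1 hr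
  rw [sum_topsOn_filter_mem hd hY hZ]
  calc ∑ τ₁ ∈ topsOn Y, ∑ τ₂ ∈ topsOn Z, ccdTopProb v (insert s(Y, Z) (τ₁ ∪ τ₂))
      = ∑ τ₁ ∈ topsOn Y, ∑ τ₂ ∈ topsOn Z,
          ccdCond v s(Y, Z) * (ccdTopProb v τ₁ * ccdTopProb v τ₂) :=
        sum_congr rfl fun τ₁ h₁ => sum_congr rfl fun τ₂ h₂ =>
          ccdTopProb_insert_union v hd hY hZ h₁ h₂
    _ = ccdCond v s(Y, Z) := by
      rw [sum_sum_const_mul_mul, ih Y (ssubset_union_left_of_disjoint hd hZ),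
        ih Z (ssubset_union_right_of_disjoint hd hY), mul_one, mul_one]

lemma ite_mem_insert_union (hd : Disjoint Y Z) (hY : Y.Nonempty) (hZ : Z.Nonempty)
    {τ₁ τ₂ : Finset (Subsplit α)} (h₁ : τ₁ ∈ topsOn Y) (h₂ : τ₂ ∈ topsOn Z) (d : Subsplit α) :
    (if d ∈ insert s(Y, Z) (τ₁ ∪ τ₂) then ccdTopProb v (insert s(Y, Z) (τ₁ ∪ τ₂)) else 0) =
      ccdCond v s(Y, Z) * if d = s(Y, Z) then ccdTopProb v τ₁ * ccdTopProb v τ₂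
        else (if d ∈ τ₁ then ccdTopProb v τ₁ else 0) * ccdTopProb v τ₂ +
          ccdTopProb v τ₁ * if d ∈ τ₂ then ccdTopProb v τ₂ else 0 := by
  have hd₂ : d ∈ τ₁ → d ∉ τ₂ := fun hd₁ hd₂ => not_clade_subset_of_mem_topsOn hd h₂ hd₂
    (valid_nontriv_subset_of_mem_topsOn h₁ hd₁).2.2
  simp only [ccdTopProb_insert_union v hd hY hZ h₁ h₂, mem_insert, mem_union]
  by_cases hdr : d = s(Y, Z)
  · simp [hdr]
  by_cases hd₁ : d ∈ τ₁
  · simp [hdr, hd₁, hd₂ hd₁]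
  · by_cases hd₂ : d ∈ τ₂ <;> simp [hdr, hd₁, hd₂]

theorem sum_topsOn_ite_mem (C : Finset α) (d : Subsplit α) :
    ∑ τ ∈ topsOn C, (if d ∈ τ then ccdTopProb v τ else 0) = ccdPathFromClade v C d := by
  induction C using Finset.strongInduction with
  | H C ih =>
  by_cases hC : 2 ≤ #C
  swap
  · simp [topsOn, hC, ccdPathFromClade, subsplitsOn_eq_empty (not_le.1 hC)]
  rw [sum_topsOn_eq_sum_subsplitsOn hC, ccdPathFromClade]
  refine sum_congr rfl fun r hr => ?_
  induction r using Sym2.ind with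
  | _ Y Z =>
  obtain ⟨hd, hY, hZ, rfl⟩ := mk_mem_subsplitsOn.1 hr
  rw [sum_topsOn_filter_mem hd hY hZ, ccdPath_mk v hd hY hZ,
    sum_congr rfl fun τ₁ h₁ => sum_congr rfl fun τ₂ h₂ => ite_mem_insert_union v hd hY hZ h₁ h₂ d]
  have hN := sum_topsOn_ccdTopProb v
  have hYs := ih Y (ssubset_union_left_of_disjoint hd hZ)
  have hZs := ih Z (ssubset_union_right_of_disjoint hd hY)
  split_ifs
  · rw [sum_sum_const_mul_mul, hN, hN, mul_one, mul_one]
  · simp_rw [mul_add, sum_add_distrib]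
    rw [sum_sum_const_mul_mul, sum_sum_const_mul_mul, hN, hN, hYs, hZs]
    ring

end CCDProbabilities

section CladeProbabilities

variable {α : Type*} [DecidableEq α] {X : Finset α} {T : Finset (Finset (Subsplit α))}

theorem ccdSubProb_eq_ccdPathFromClade (hT : ∀ τ, τ ∈ T ↔ IsTopology X τ)
    (v : Subsplit α → ℝ) (d : Subsplit α) : ccdSubProb T v d = ccdPathFromClade v X d := by
  have hT' : T = allTops X := ext fun τ => (hT τ).trans mem_allTops.symm
  rw [ccdSubProb, sum_filter, hT']
  by_cases hX : 2 ≤ #X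
  · rw [← topsOn_of_two_le hX, sum_topsOn_ite_mem]
  · rw [ccdPathFromClade, subsplitsOn_eq_empty (not_le.1 hX), sum_empty]
    exact sum_eq_zero fun τ hτ => absurd (mem_allTops.1 hτ).two_le hX

theorem ccdCladeProb_eq_sum_ccdSubProb (hT : ∀ τ, τ ∈ T ↔ IsTopology X τ)
    (v : Subsplit α → ℝ) {W : Finset α} (hW : 2 ≤ #W) :
    ccdCladeProb X T v W = ∑ d ∈ subsplitsOn W, ccdSubProb T v d := by
  simp only [ccdCladeProb, ccdSubProb, sum_filter]
  rw [sum_comm]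
  refine sum_congr rfl fun τ hτ => ?_
  have ht := (hT τ).1 hτ
  rw [ht.sum_subsplitsOn_ite_mem]
  exact if_congr (ht.exists_clade_eq_iff hW).symm rfl rfl

end CladeProbabilities

section CladePaths

variable {α : Type*} [DecidableEq α] (v : Subsplit α → ℝ) {C W Y Z : Finset α}

/-- `q(a →* W | a)`: the probability that the clade `W` is reached at or below the subsplit `a`. -/
noncomputable def ccdPathToClade (a : Subsplit α) (W : Finset α) : ℝ :=
  ∑ d ∈ subsplitsOn W, ccdPath v a d

/-- `q(C →* W | C)`: the probability that the clade `W` is reached from the clade `C`. -/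
noncomputable def ccdCladePath (C W : Finset α) : ℝ :=
  ∑ d ∈ subsplitsOn W, ccdPathFromClade v C d

theorem ccdCladeProb_eq_ccdCladePath {X : Finset α} {T : Finset (Finset (Subsplit α))}
    (hT : ∀ τ, τ ∈ T ↔ IsTopology X τ) (hW : 2 ≤ #W) :
    ccdCladeProb X T v W = ccdCladePath v X W := by
  rw [ccdCladeProb_eq_sum_ccdSubProb hT v hW, ccdCladePath]
  simp only [ccdSubProb_eq_ccdPathFromClade hT]

lemma ccdCladePath_eq_sum :
    ccdCladePath v C W = ∑ r ∈ subsplitsOn C, ccdCond v r * ccdPathToClade v r W := by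
  simp only [ccdCladePath, ccdPathFromClade, ccdPathToClade, mul_sum]
  exact sum_comm

lemma ccdPathToClade_mk (hd : Disjoint Y Z) (hY : Y.Nonempty) (hZ : Z.Nonempty)
    (hW : W ≠ Y ∪ Z) :
    ccdPathToClade v s(Y, Z) W = ccdCladePath v Y W + ccdCladePath v Z W := by
  rw [ccdPathToClade, ccdCladePath, ccdCladePath, ← sum_add_distrib]
  refine sum_congr rfl fun d hd' => ?_
  rw [ccdPath_mk v hd hY hZ, if_neg]
  rintro rfl
  exact hW (mem_subsplitsOn.1 hd').2.2.symm

lemma ccdCladePath_self (hW : 2 ≤ #W) : ccdCladePath v W W = 1 := by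
  rw [ccdCladePath, ← sum_ccdCond v hW]
  refine sum_congr rfl fun d hd => ?_
  obtain ⟨hdv, hdn, rfl⟩ := mem_subsplitsOn.1 hd
  exact ccdPathFromClade_clade_self v hdv hdn

lemma ccdCladePath_eq_zero (h : ¬ W ⊆ C) : ccdCladePath v C W = 0 :=
  sum_eq_zero fun _ hd => ccdPathFromClade_eq_zero v ((mem_subsplitsOn.1 hd).2.2 ▸ h)

end CladePaths

section Derivative

variable {α : Type*} [DecidableEq α] (v : Subsplit α → ℝ) {s' : Subsplit α}

lemma ccdCond_update_of_clade_ne {u : Subsplit α} (h : clade u ≠ clade s') (x : ℝ) :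
    ccdCond (Function.update v s' x) u = ccdCond v u := by
  have hne : ∀ w, clade w = clade u → w ≠ s' := by
    rintro w hw rfl
    exact h hw.symm
  simp only [ccdCond, Function.update_of_ne (hne u rfl)]
  congr 1
  exact sum_congr rfl fun w hw => by
    rw [Function.update_of_ne (hne w (mem_subsplitsOn.1 hw).2.2)]

lemma hasDerivAt_ccdCond_update (hs'v : Valid s') (hs'n : Nontriv s') (u : Subsplit α) :
    HasDerivAt (fun x => ccdCond (Function.update v s' x) u)
      (ccdCond v u * ((if u = s' then 1 else 0) - if clade u = clade s' then ccdCond v s' else 0))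
      (v s') := by
  by_cases hcl : clade u = clade s'
  swap
  · simp only [ccdCond_update_of_clade_ne v hcl]
    simpa [hcl, show u ≠ s' by rintro rfl; exact hcl rfl] using
      hasDerivAt_const (v s') (ccdCond v u)
  have hs' : s' ∈ subsplitsOn (clade u) := mem_subsplitsOn.2 ⟨hs'v, hs'n, hcl.symm⟩
  have hexp : ∀ w, HasDerivAt (fun x => Real.exp (Function.update v s' x w))
      (if w = s' then Real.exp (v s') else 0) (v s') := by
    intro w
    by_cases hw : w = s'
    · subst hw
      simpa using Real.hasDerivAt_exp (v w)
    · simpa [hw] using hasDerivAt_const (v s') (Real.exp (v w))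
  have hden := HasDerivAt.fun_sum (u := subsplitsOn (clade u)) fun w _ => hexp w
  rw [sum_ite_eq', if_pos hs'] at hden
  have hpos : 0 < ∑ w ∈ subsplitsOn (clade u), Real.exp (v w) :=
    sum_pos (fun _ _ => Real.exp_pos _) ⟨s', hs'⟩
  have hquot := (hexp u).fun_div hden (by simpa using hpos.ne')
  simp only [Function.update_eq_self] at hquot
  refine hquot.congr_deriv ?_
  have hne := hpos.ne'
  simp only [ccdCond, hcl, if_true]
  rw [hcl] at hne
  field_simp
  split_ifs with hus
  · subst hus; ring
  · ring

lemma hasDerivAt_ccdPath_mk {w : ℝ → Subsplit α → ℝ} {x₀ : ℝ} {Y Z : Finset α}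
    (hd : Disjoint Y Z) (hY : Y.Nonempty) (hZ : Z.Nonempty) (d : Subsplit α) {dY dZ : ℝ}
    (hdY : HasDerivAt (fun x => ccdPathFromClade (w x) Y d) dY x₀)
    (hdZ : HasDerivAt (fun x => ccdPathFromClade (w x) Z d) dZ x₀) :
    HasDerivAt (fun x => ccdPath (w x) s(Y, Z) d) (if d = s(Y, Z) then 0 else dY + dZ) x₀ := by
  simp only [ccdPath_mk _ hd hY hZ]
  split_ifs
  · exact hasDerivAt_const _ _
  · exact hdY.add hdZ

lemma ccdPath_sub_ccdPathFromClade_eq_zero (hs'v : Valid s') (hs'n : Nontriv s') {d : Subsplit α}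
    (h : clade s' ⊂ clade d) : ccdPath v s' d - ccdPathFromClade v (clade s') d = 0 := by
  rw [ccdPath_eq_zero v hs'v hs'n (by rintro rfl; exact h.ne rfl) h.asymm,
    ccdPathFromClade_eq_zero v h.not_subset, sub_zero]

lemma hasDerivAt_ccdPath_update_mk (hs'v : Valid s') (hs'n : Nontriv s') {Y Z : Finset α}
    (hd : Disjoint Y Z) (hY : Y.Nonempty) (hZ : Z.Nonempty) (d : Subsplit α) {δ : ℝ}
    (hδ : δ = ccdCond v s' * (ccdPath v s' d - ccdPathFromClade v (clade s') d))
    (hdY : HasDerivAt (fun x => ccdPathFromClade (Function.update v s' x) Y d)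
      (ccdCladePath v Y (clade s') * δ) (v s'))
    (hdZ : HasDerivAt (fun x => ccdPathFromClade (Function.update v s' x) Z d)
      (ccdCladePath v Z (clade s') * δ) (v s')) :
    HasDerivAt (fun x => ccdPath (Function.update v s' x) s(Y, Z) d)
      (if Y ∪ Z = clade s' then 0 else ccdPathToClade v s(Y, Z) (clade s') * δ) (v s') := by
  refine (hasDerivAt_ccdPath_mk hd hY hZ d hdY hdZ).congr_deriv ?_
  by_cases hW : Y ∪ Z = clade s'
  · rw [ccdCladePath_eq_zero v (hW ▸ not_union_subset_left hd hZ),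
      ccdCladePath_eq_zero v (hW ▸ union_comm Z Y ▸ not_union_subset_left hd.symm hY)]
    simp [hW]
  rw [if_neg hW, ccdPathToClade_mk v hd hY hZ (Ne.symm hW), add_mul]
  split_ifs with hdr
  · -- either `U(s')` lies strictly inside `d`, or no child clade of `d` contains it
    by_cases hsub : clade s' ⊆ Y ∨ clade s' ⊆ Z
    · have hss : clade s' ⊂ clade d := by
        rw [hdr, clade_mk]
        exact hsub.elim (·.trans_ssubset (ssubset_union_left_of_disjoint hd hZ))
          (·.trans_ssubset (ssubset_union_right_of_disjoint hd hY))
      rw [hδ, ccdPath_sub_ccdPathFromClade_eq_zero v hs'v hs'n hss]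
      ring
    · rw [ccdCladePath_eq_zero v (not_or.1 hsub).1, ccdCladePath_eq_zero v (not_or.1 hsub).2]
      ring
  · rfl

lemma sum_subsplitsOn_ccdCond_deriv_mul_ccdPath (hs'v : Valid s') (hs'n : Nontriv s')
    (d : Subsplit α) :
    ∑ r ∈ subsplitsOn (clade s'), ccdCond v r * ((if r = s' then 1 else 0) -
        if clade r = clade s' then ccdCond v s' else 0) * ccdPath v r d =
      ccdCond v s' * (ccdPath v s' d - ccdPathFromClade v (clade s') d) := by
  have hterm : ∀ r ∈ subsplitsOn (clade s'), ccdCond v r * ((if r = s' then 1 else 0) -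
        if clade r = clade s' then ccdCond v s' else 0) * ccdPath v r d =
      (if r = s' then ccdCond v r * ccdPath v r d else 0) -
        ccdCond v s' * (ccdCond v r * ccdPath v r d) := by
    intro r hr
    rw [if_pos (mem_subsplitsOn.1 hr).2.2]
    split_ifs <;> ring
  rw [sum_congr rfl hterm, sum_sub_distrib, sum_ite_eq', ← mul_sum, ccdPathFromClade,
    if_pos (mem_subsplitsOn.2 ⟨hs'v, hs'n, rfl⟩), mul_sub]

theorem hasDerivAt_ccdPathFromClade_update (hs'v : Valid s') (hs'n : Nontriv s')
    (d : Subsplit α) (C : Finset α) :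
    HasDerivAt (fun x => ccdPathFromClade (Function.update v s' x) C d)
      (ccdCladePath v C (clade s') *
        (ccdCond v s' * (ccdPath v s' d - ccdPathFromClade v (clade s') d))) (v s') := by
  set δ := ccdCond v s' * (ccdPath v s' d - ccdPathFromClade v (clade s') d) with hδ
  induction C using Finset.strongInduction with
  | H C ih =>
  have hpath : ∀ r ∈ subsplitsOn C, HasDerivAt (fun x => ccdPath (Function.update v s' x) r d)
      (if clade r = clade s' then 0 else ccdPathToClade v r (clade s') * δ) (v s') := by
    intro r hr
    induction r using Sym2.ind with
    | _ Y Z =>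
    obtain ⟨hd, hY, hZ, rfl⟩ := mk_mem_subsplitsOn.1 hr
    exact hasDerivAt_ccdPath_update_mk v hs'v hs'n hd hY hZ d hδ
      (ih Y (ssubset_union_left_of_disjoint hd hZ)) (ih Z (ssubset_union_right_of_disjoint hd hY))
  simp only [ccdPathFromClade]
  refine (HasDerivAt.fun_sum fun r hr =>
    (hasDerivAt_ccdCond_update v hs'v hs'n r).mul (hpath r hr)).congr_deriv ?_
  simp only [Function.update_eq_self]
  by_cases hC : C = clade s'
  · subst hC
    have hsoftmax := sum_subsplitsOn_ccdCond_deriv_mul_ccdPath v hs'v hs'n d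
    rw [← hδ] at hsoftmax
    rw [ccdCladePath_self v (two_le_card_clade hs'v hs'n), one_mul]
    refine (sum_congr rfl fun r hr => ?_).trans hsoftmax
    simp only [(mem_subsplitsOn.1 hr).2.2, if_true, mul_zero, add_zero]
  · rw [ccdCladePath_eq_sum, sum_mul]
    refine sum_congr rfl fun r hr => ?_
    have hr' : clade r ≠ clade s' := (mem_subsplitsOn.1 hr).2.2 ▸ hC
    rw [if_neg hr', if_neg hr', if_neg fun h : r = s' => hr' (h ▸ rfl)]
    ring

end Derivative

section Statements

variable {α : Type*} [DecidableEq α]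
theorem stmt15_general (X : Finset α) (T : Finset (Finset (Subsplit α)))
    (hT : ∀ τ, τ ∈ T ↔ IsTopology X τ)
    (v : Subsplit α → ℝ) (s s' : Subsplit α)
    (hs'v : Subsplit.Valid s') (hs'nt : Subsplit.Nontriv s') :
    HasDerivAt (fun x : ℝ => ccdSubProb T (Function.update v s' x) s)
      (ccdCladeProb X T v (Subsplit.clade s') * ccdCond v s' *
        (ccdPath v s' s - ccdPathFromClade v (Subsplit.clade s') s))
      (v s') := by
  simp only [ccdSubProb_eq_ccdPathFromClade hT,
    ccdCladeProb_eq_ccdCladePath v hT (two_le_card_clade hs'v hs'nt), mul_assoc]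
  exact hasDerivAt_ccdPathFromClade_update v hs'v hs'nt s X

theorem stmt15 (X : Finset α) (T : Finset (Finset (Subsplit α)))
    (hT : ∀ τ, τ ∈ T ↔ IsTopology X τ)
    (v : Subsplit α → ℝ) (s s' : Subsplit α)
    (hsv : Subsplit.Valid s) (hsnt : Subsplit.Nontriv s) (hscl : Subsplit.clade s ⊆ X)
    (hs'v : Subsplit.Valid s') (hs'nt : Subsplit.Nontriv s') (hs'cl : Subsplit.clade s' ⊆ X) :
    HasDerivAt (fun x : ℝ => ccdSubProb T (Function.update v s' x) s)
      (ccdCladeProb X T v (Subsplit.clade s') * ccdCond v s' *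
        (ccdPath v s' s - ccdPathFromClade v (Subsplit.clade s') s))
      (v s') :=
  stmt15_general X T hT v s s' hs'v hs'nt

end Statements
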